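/- Let n = 2, c = 2, and O = {a, b, c, d}, and let f be an anonymous, neutral, SD-efficient assignment rule. At the profile where agent 1 reports a ≻ b ≻ c ≻ d and agent 2 reports b ≻ a ≻ c ≻ d, f must return the random assignment giving agent 1 object a with probability 1 and objects c and d each with probability 1/2, and agent 2 object b with probability 1 and objects c and d each with probability 1/2. -/

import Mathlib

open Finset
open scoped Classical

/-- A (binary-relation) preference over `m` objects; `R a b` means `a ≿ b`. -/
abbrev Pref (m : ℕ) := Fin m → Fin m → Prop

/-- A strict (linear) preference: reflexive, transitive, antisymmetric and total
weak relation `≿`, i.e. a linear order on the objects. -/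
def IsStrictPref {m : ℕ} (R : Pref m) : Prop :=
  (∀ a, R a a) ∧ (∀ a b c, R a b → R b c → R a c) ∧
  (∀ a b, R a b → R b a → a = b) ∧ (∀ a b, R a b ∨ R b a)

/-- A profile of strict preferences, one for each agent. -/
def ValidProfile {n m : ℕ} (pref : Fin n → Pref m) : Prop :=
  ∀ i, IsStrictPref (pref i)

/-- `x` (first-order) stochastically dominates `y` w.r.t. preference `R`:
for every object `o`, the total mass on objects weakly preferred to `o`
under `x` is at least that under `y`. -/
def sdPrefers {m : ℕ} (R : Pref m) (x y : Fin m → ℝ) : Prop :=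
  ∀ o : Fin m,
    ∑ o' ∈ univ.filter (fun o' => R o' o), x o' ≥
    ∑ o' ∈ univ.filter (fun o' => R o' o), y o'

/-- Strict stochastic dominance. -/
def sdStrict {m : ℕ} (R : Pref m) (x y : Fin m → ℝ) : Prop :=
  sdPrefers R x y ∧ ¬ sdPrefers R y x

/-- Strict downward-lexicographic (DL) preference of `x` over `y`:
at the most preferred object where they differ, `x` gives more. -/
def dlStrict {m : ℕ} (R : Pref m) (x y : Fin m → ℝ) : Prop :=
  ∃ o : Fin m, x o > y o ∧ ∀ o', x o' ≠ y o' → R o o'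

/-- Weak DL preference. -/
def dlPrefers {m : ℕ} (R : Pref m) (x y : Fin m → ℝ) : Prop :=
  x = y ∨ dlStrict R x y

/-- A random assignment: entries in `[0,1]`, every object fully allocated
(column sums `1`), every agent receiving `c` units (row sums `c`). -/
def IsRandomAssignment (n m c : ℕ) (p : Fin n → Fin m → ℝ) : Prop :=
  (∀ i o, 0 ≤ p i o ∧ p i o ≤ 1) ∧
  (∀ o, ∑ i, p i o = 1) ∧
  (∀ i, ∑ o, p i o = (c : ℝ))

/-- A discrete (0/1) matrix. -/
def IsDiscreteAlloc (n m : ℕ) (p : Fin n → Fin m → ℝ) : Prop :=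
  ∀ i o, p i o = 0 ∨ p i o = 1

/-- `p` is SD-efficient at profile `pref`: no random assignment `q` weakly
SD-dominates it for everyone and strictly for someone. -/
def SDEfficientAssignment (n m c : ℕ) (pref : Fin n → Pref m)
    (p : Fin n → Fin m → ℝ) : Prop :=
  ¬ ∃ q : Fin n → Fin m → ℝ, IsRandomAssignment n m c q ∧
      (∀ i, sdPrefers (pref i) (q i) (p i)) ∧
      ∃ j, sdStrict (pref j) (q j) (p j)

/-- Anonymity of an assignment rule: permuting the agents' reports permutes
their allocations accordingly. -/
def Anonymous (n m : ℕ) (f : (Fin n → Pref m) → Fin n → Fin m → ℝ) : Prop :=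
  ∀ (pref : Fin n → Pref m) (σ : Equiv.Perm (Fin n)), ValidProfile pref →
    ∀ i, f (fun j => pref (σ j)) i = f pref (σ i)

/-- Neutrality of an assignment rule: relabelling the objects (in all
preferences) relabels the returned assignment accordingly. -/
def Neutral (n m : ℕ) (f : (Fin n → Pref m) → Fin n → Fin m → ℝ) : Prop :=
  ∀ (pref : Fin n → Pref m) (τ : Equiv.Perm (Fin m)), ValidProfile pref →
    ∀ i o, f (fun j a b => pref j (τ.symm a) (τ.symm b)) i o = f pref i (τ.symm o)

/-- Weak SD-strategyproofness: no agent can misreport and obtain an allocation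
he strictly SD-prefers (w.r.t. his true preference). -/
def WeakSDSP (n m : ℕ) (f : (Fin n → Pref m) → Fin n → Fin m → ℝ) : Prop :=
  ¬ ∃ (pref : Fin n → Pref m) (i : Fin n) (R' : Pref m),
      ValidProfile pref ∧ IsStrictPref R' ∧
      sdStrict (pref i) (f (Function.update pref i R') i) (f pref i)

/-- Weak SD group-strategyproofness: no nonempty coalition can jointly
misreport so that every member strictly SD-prefers the new allocation. -/
def WeakSDGroupSP (n m : ℕ) (f : (Fin n → Pref m) → Fin n → Fin m → ℝ) : Prop :=
  ¬ ∃ (pref pref' : Fin n → Pref m) (S : Finset (Fin n)),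
      ValidProfile pref ∧ S.Nonempty ∧
      (∀ i ∈ S, IsStrictPref (pref' i)) ∧
      (∀ i ∉ S, pref' i = pref i) ∧
      ∀ i ∈ S, sdStrict (pref i) (f pref' i) (f pref i)

/-- DL-strategyproofness: truth-telling always yields a weakly DL-preferred
allocation. -/
def DLSP (n m : ℕ) (f : (Fin n → Pref m) → Fin n → Fin m → ℝ) : Prop :=
  ∀ (pref : Fin n → Pref m) (i : Fin n) (R' : Pref m),
    ValidProfile pref → IsStrictPref R' →
    dlPrefers (pref i) (f pref i) (f (Function.update pref i R') i)

/-- The set of the `c` most preferred objects under the strict preference `R`: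
objects having at most `c` objects weakly preferred to them. -/
noncomputable def topSet (m c : ℕ) (R : Pref m) : Finset (Fin m) :=
  univ.filter (fun o => (univ.filter (fun o' => R o' o)).card ≤ c)

/-- A perfect assignment: every agent receives each of his `c` most preferred
objects with probability `1`. -/
def PerfectAssignment (n m c : ℕ) (pref : Fin n → Pref m) (p : Fin n → Fin m → ℝ) : Prop :=
  ∀ i, ∀ o ∈ topSet m c (pref i), p i o = 1

/-- Ex post efficiency: `p` is a convex combination of SD-efficient discrete
assignments. -/
def ExPostEfficient (n m c : ℕ) (pref : Fin n → Pref m)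
    (p : Fin n → Fin m → ℝ) : Prop :=
  ∃ (k : ℕ) (w : Fin k → ℝ) (d : Fin k → Fin n → Fin m → ℝ),
    (∀ j, 0 ≤ w j) ∧ (∑ j, w j = 1) ∧
    (∀ j, IsDiscreteAlloc n m (d j) ∧ IsRandomAssignment n m c (d j) ∧
          SDEfficientAssignment n m c pref (d j)) ∧
    (∀ i o, p i o = ∑ j, w j * d j i o)

/-- A (possibly unbalanced) 0/1 allocation matrix: 0/1 entries, every object
assigned to exactly one agent. -/
def ZeroOneAlloc (n m : ℕ) (p : Fin n → Fin m → ℝ) : Prop :=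
  (∀ i o, p i o = 0 ∨ p i o = 1) ∧ (∀ o, ∑ i, p i o = 1)

/-- Pareto optimality among 0/1 allocation matrices (w.r.t. SD comparisons). -/
def ParetoOptAlloc (n m : ℕ) (pref : Fin n → Pref m)
    (p : Fin n → Fin m → ℝ) : Prop :=
  ZeroOneAlloc n m p ∧
  ¬ ∃ q : Fin n → Fin m → ℝ, ZeroOneAlloc n m q ∧
      (∀ i, sdPrefers (pref i) (q i) (p i)) ∧
      ∃ j, sdStrict (pref j) (q j) (p j)

/-- `p` is the outcome of the priority (serial dictator) rule for the agent
ordering `σ`: it is a discrete assignment in which, sequentially, agent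
`σ k` receives his `c` most preferred objects among those not taken by the
earlier agents `σ 0, …, σ (k-1)`. -/
def PriorityOutcome (n m c : ℕ) (pref : Fin n → Pref m) (σ : Equiv.Perm (Fin n))
    (p : Fin n → Fin m → ℝ) : Prop :=
  IsDiscreteAlloc n m p ∧ IsRandomAssignment n m c p ∧
  ∀ (k : Fin n) (o : Fin m), (∀ j, j < k → p (σ j) o ≠ 1) →
    (p (σ k) o = 1 ↔
      (univ.filter (fun o' => (∀ j, j < k → p (σ j) o' ≠ 1) ∧ pref (σ k) o' o)).card ≤ c)

/-- The strict preference induced by a ranking function (smaller rank =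
more preferred). -/
def prefOfRank {m : ℕ} (r : Fin m → ℕ) : Pref m := fun a b => r a ≤ r b

/-!
Swapping the two agents together with the objects `a` and `b` maps the profile to itself, so by
anonymity and neutrality agent 2 receives `b, a, c, d` exactly as agent 1 receives `a, b, c, d`.
The column sums then give `c` and `d` probability `1/2` to each agent, and agent 1 holds one unit
of `a` and `b` together. If agent 1 held some `b`, agent 2 would hold some `a`, and trading them
would improve both agents, contradicting SD-efficiency.
-/

lemma isStrictPref_prefOfRank {m : ℕ} {r : Fin m → ℕ} (hr : Function.Injective r) :
    IsStrictPref (prefOfRank r) :=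
  ⟨fun _ => le_rfl, fun _ _ _ => le_trans, fun _ _ h₁ h₂ => hr (le_antisymm h₁ h₂),
    fun _ _ => le_total _ _⟩

lemma apply_perm_eq_of_relabel_eq {n m : ℕ} {f : (Fin n → Pref m) → Fin n → Fin m → ℝ}
    (hAnon : Anonymous n m f) (hNeut : Neutral n m f) {pref : Fin n → Pref m}
    (hv : ValidProfile pref) (σ : Equiv.Perm (Fin n)) (τ : Equiv.Perm (Fin m))
    (hrel : (fun j a b => pref j (τ.symm a) (τ.symm b)) = fun j => pref (σ j)) (i : Fin n)
    (o : Fin m) : f pref (σ i) o = f pref i (τ.symm o) := by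
  rw [← hAnon pref σ hv i, ← hrel, hNeut pref τ hv]

/-- Move `δ` units of probability from object `b` to object `a`. -/
def transfer {m : ℕ} (a b : Fin m) (δ : ℝ) (x : Fin m → ℝ) : Fin m → ℝ :=
  fun o => x o + δ * ((if o = a then 1 else 0) - (if o = b then 1 else 0))

section transfer

variable {m : ℕ} {R : Pref m} {a b : Fin m} {δ : ℝ} {x : Fin m → ℝ}

lemma transfer_neg : transfer a b (-δ) x = transfer b a δ x := by
  funext o
  simp only [transfer]
  ring

lemma transfer_zero : transfer a b 0 x = x := by
  funext o
  simp [transfer]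

lemma sum_transfer (s : Finset (Fin m)) :
    ∑ o ∈ s, transfer a b δ x o =
      ∑ o ∈ s, x o + δ * ((if a ∈ s then 1 else 0) - (if b ∈ s then 1 else 0)) := by
  simp [transfer, sum_add_distrib, ← mul_sum, sum_sub_distrib]

lemma sdPrefers_transfer (htrans : ∀ a b c, R a b → R b c → R a c) (hab : R a b)
    (hδ : 0 ≤ δ) : sdPrefers R (transfer a b δ x) x := by
  intro o
  rw [sum_transfer]
  have hmono : R b o → R a o := htrans a b o hab
  simp only [mem_filter, mem_univ, true_and]
  split_ifs <;> simp_all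

lemma not_sdPrefers_transfer (hrefl : R a a) (hba : ¬ R b a) (hδ : 0 < δ) :
    ¬ sdPrefers R x (transfer a b δ x) := by
  intro h
  have := h a
  rw [sum_transfer] at this
  simp only [mem_filter, mem_univ, true_and, if_pos hrefl, if_neg hba] at this
  linarith

end transfer

lemma IsRandomAssignment.add_le_one {n m c : ℕ} {p : Fin n → Fin m → ℝ}
    (hp : IsRandomAssignment n m c p) {i j : Fin n} (hij : i ≠ j) (o : Fin m) :
    p i o + p j o ≤ 1 := by
  rw [← hp.2.1 o, ← sum_pair (f := fun k => p k o) hij]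
  exact sum_le_sum_of_subset_of_nonneg (subset_univ _) fun k _ _ => (hp.1 k o).1

/-- Exchanging `min (p i b) (p j a)` units of `a` against `b` between `i` and `j` keeps a random
assignment and improves `i` strictly and `j` weakly. -/
theorem not_sdEfficient_of_trade {n m c : ℕ} {pref : Fin n → Pref m} (hv : ValidProfile pref)
    {p : Fin n → Fin m → ℝ} (hp : IsRandomAssignment n m c p) {i j : Fin n} (hij : i ≠ j)
    {a b : Fin m} (hab : a ≠ b) (hia : pref i a b) (hjb : pref j b a) (hib : 0 < p i b)
    (hja : 0 < p j a) : ¬ SDEfficientAssignment n m c pref p := by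
  set δ := min (p i b) (p j a)
  have hδ : 0 < δ := lt_min hib hja
  have hδib : δ ≤ p i b := min_le_left _ _
  have hδja : δ ≤ p j a := min_le_right _ _
  have hia1 := hp.add_le_one hij a
  have hjb1 := hp.add_le_one hij.symm b
  let u : Fin n → ℝ := fun k => (if k = i then 1 else 0) - (if k = j then 1 else 0)
  let q : Fin n → Fin m → ℝ := fun k => transfer a b (δ * u k) (p k)
  have hqi : q i = transfer a b δ (p i) := by simp [q, u, hij]
  have hqj : q j = transfer b a δ (p j) := by
    rw [← transfer_neg]
    simp [q, u, hij.symm]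
  have hqk : ∀ k, k ≠ i → k ≠ j → q k = p k := by
    intro k hki hkj
    simp [q, u, hki, hkj, transfer_zero]
  refine fun hEff => hEff ⟨q, ⟨?_, ?_, ?_⟩, fun k => ?_, i, ?_⟩
  · intro k o
    simp only [q, u, transfer]
    have := hp.1 k o
    split_ifs <;> subst_vars <;> first | exact absurd rfl hij | exact absurd rfl hab |
      constructor <;> linarith
  · intro o
    simp [q, u, transfer, sum_add_distrib, ← sum_mul, ← mul_sum,
      sum_sub_distrib, hp.2.1]
  · intro k
    rw [sum_transfer, hp.2.2]
    simp
  · by_cases hki : k = i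
    · subst hki
      rw [hqi]
      exact sdPrefers_transfer (hv k).2.1 hia hδ.le
    by_cases hkj : k = j
    · subst hkj
      rw [hqj]
      exact sdPrefers_transfer (hv k).2.1 hjb hδ.le
    · rw [hqk k hki hkj]
      exact fun o => le_rfl
  · rw [hqi]
    exact ⟨sdPrefers_transfer (hv i).2.1 hia hδ.le, not_sdPrefers_transfer ((hv i).1 a)
      (fun hba => hab ((hv i).2.2.1 a b hia hba)) hδ⟩

/-- With `n = 2`, `c = 2`, objects `a,b,c,d` (indices
`0,1,2,3`): any anonymous, neutral, SD-efficient assignment rule must, at the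
profile where agent 1 reports `a ≻ b ≻ c ≻ d` and agent 2 reports
`b ≻ a ≻ c ≻ d`, return the assignment giving agent 1 object `a` with
probability `1` and `c, d` each with probability `1/2`, and agent 2 object `b`
with probability `1` and `c, d` each with probability `1/2`. -/
theorem rule_value_at_abcd_bacd_profile
    (f : (Fin 2 → Pref 4) → Fin 2 → Fin 4 → ℝ)
    (hRA : ∀ pref, ValidProfile pref → IsRandomAssignment 2 4 2 (f pref))
    (hAnon : Anonymous 2 4 f) (hNeut : Neutral 2 4 f)
    (hEff : ∀ pref, ValidProfile pref → SDEfficientAssignment 2 4 2 pref (f pref)) :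
    f ![prefOfRank ![0, 1, 2, 3], prefOfRank ![1, 0, 2, 3]] =
      ![![1, 0, 1/2, 1/2], ![0, 1, 1/2, 1/2]] := by
  set P : Fin 2 → Pref 4 := ![prefOfRank ![0, 1, 2, 3], prefOfRank ![1, 0, 2, 3]]
  have hv : ValidProfile P := by
    intro i
    fin_cases i <;> exact isStrictPref_prefOfRank (by decide)
  obtain ⟨-, hcol, hrow⟩ := hRA P hv
  have hcol' : ∀ o, f P 0 o + f P 1 o = 1 := by simpa [Fin.sum_univ_two] using hcol
  have hrow0 : f P 0 0 + f P 0 1 + f P 0 2 + f P 0 3 = 2 := by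
    simpa [Fin.sum_univ_four] using hrow 0
  have hrow1 : f P 1 0 + f P 1 1 + f P 1 2 + f P 1 3 = 2 := by
    simpa [Fin.sum_univ_four] using hrow 1
  -- swapping the two agents and the objects `a`, `b` leaves the profile unchanged
  have hswap : ∀ o, f P 1 o = f P 0 (Equiv.swap 0 1 o) := by
    refine apply_perm_eq_of_relabel_eq hAnon hNeut hv (Equiv.swap 0 1) (Equiv.swap 0 1) ?_ 0
    funext j
    fin_cases j <;> exact congrArg prefOfRank (by decide)
  have hc : f P 1 2 = f P 0 2 := hswap 2
  have hd : f P 1 3 = f P 0 3 := hswap 3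
  have ha : f P 0 0 = 1 := by
    by_contra hne
    have hlt : f P 0 0 < 1 := lt_of_le_of_ne ((hRA P hv).1 0 0).2 hne
    exact not_sdEfficient_of_trade hv (hRA P hv) (i := 0) (j := 1) (a := 0) (b := 1)
      (by decide) (by decide) (by simp [P, prefOfRank]) (by simp [P, prefOfRank])
      (by linarith [hcol' 2, hcol' 3]) (by linarith [hcol' 0]) (hEff P hv)
  funext i o
  fin_cases i <;> fin_cases o <;> simp <;> linarith [hcol' 0, hcol' 2, hcol' 3]
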